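/- arXiv:2208.00143 — 8 statements merged into one kernel-verified Lean document; each statement's English description precedes it below -/
import Mathlib

section
/- In a Clifford semigroup, the idempotents form a subsemigroup which is a semilattice (commutative idempotent semigroup), and the map sending each element to the unique idempotent in its H-class is a semigroup homomorphism onto this semilattice. -/
variable {S : Type*}

/-- Principal left ideal `S¹a = {a} ∪ Sa`. -/
def pL [Semigroup S] (a : S) : Set S := insert a {x | ∃ s, s * a = x}

/-- Principal right ideal `aS¹ = {a} ∪ aS`. -/
def pR [Semigroup S] (a : S) : Set S := insert a {x | ∃ s, a * s = x}

/-- The set `Sa`. For an idempotent `e`, `Se` is the principal left ideal. -/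
def lset [Semigroup S] (a : S) : Set S := {x | ∃ s, s * a = x}

/-- The set `aS`. For an idempotent `e`, `eS` is the principal right ideal. -/
def rset [Semigroup S] (a : S) : Set S := {x | ∃ s, a * s = x}

/-- The set `aSb`. -/
def hset [Semigroup S] (a b : S) : Set S := {x | ∃ s, a * s * b = x}

/-- Green's `L` relation. -/
def GreenL [Semigroup S] (a b : S) : Prop := pL a = pL b

/-- Green's `R` relation. -/
def GreenR [Semigroup S] (a b : S) : Prop := pR a = pR b

/-- Green's `H` relation. -/
def GreenH [Semigroup S] (a b : S) : Prop := GreenL a b ∧ GreenR a b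

/-- Green's `D` relation. -/
def GreenD [Semigroup S] (a b : S) : Prop := ∃ c, GreenL a c ∧ GreenR c b

lemma pL_mono [Semigroup S] {x y : S} (h : x ∈ pL y) : pL x ⊆ pL y := by
  rintro z (rfl | ⟨t, rfl⟩)
  · exact h
  · rcases h with rfl | ⟨s, rfl⟩
    · exact Or.inr ⟨t, rfl⟩
    · exact Or.inr ⟨t * s, mul_assoc ..⟩

lemma pR_mono [Semigroup S] {x y : S} (h : x ∈ pR y) : pR x ⊆ pR y := by
  rintro z (rfl | ⟨t, rfl⟩)
  · exact h
  · rcases h with rfl | ⟨s, rfl⟩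
    · exact Or.inr ⟨t, rfl⟩
    · exact Or.inr ⟨s * t, (mul_assoc ..).symm⟩

lemma greenH_of [Semigroup S] {u v : S} (h1 : u ∈ pL v) (h2 : v ∈ pL u)
    (h3 : u ∈ pR v) (h4 : v ∈ pR u) : GreenH u v :=
  ⟨Set.Subset.antisymm (pL_mono h1) (pL_mono h2),
   Set.Subset.antisymm (pR_mono h3) (pR_mono h4)⟩

/-- Key structure lemma: if `a H ea` with `ea` a central idempotent, then `ea`
is an identity for `a` and `a` has an inverse relative to `ea`. -/
lemma key [Semigroup S]
    (hcent : ∀ e : S, e * e = e → ∀ s : S, e * s = s * e)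
    {a ea : S} (he : ea * ea = ea) (h : GreenH a ea) :
    ea * a = a ∧ a * ea = a ∧ ∃ a', a' * a = ea ∧ a * a' = ea := by
  have haL : a ∈ pL ea := h.1 ▸ Set.mem_insert a _
  have heaL : ea ∈ pL a := h.1 ▸ Set.mem_insert ea _
  have heaR : ea ∈ pR a := h.2 ▸ Set.mem_insert ea _
  have haea : a * ea = a := by
    rcases haL with rfl | ⟨s, rfl⟩
    · exact he
    · rw [mul_assoc, he]
  have heaa : ea * a = a := by rw [hcent ea he a, haea]
  refine ⟨heaa, haea, ?_⟩
  obtain ⟨s, hs⟩ : ∃ s, s * a = ea := by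
    rcases heaL with h' | ⟨s, hs⟩
    · exact ⟨a, by rw [← h', he]⟩
    · exact ⟨s, hs⟩
  obtain ⟨t, ht⟩ : ∃ t, a * t = ea := by
    rcases heaR with h' | ⟨t, ht⟩
    · exact ⟨a, by rw [← h', he]⟩
    · exact ⟨t, ht⟩
  have hs' : (ea * s * ea) * a = ea := by
    rw [mul_assoc, mul_assoc, heaa, hs, he]
  have ht' : a * (ea * t * ea) = ea := by
    rw [← mul_assoc, ← mul_assoc, haea, ht, he]
  have heq : ea * s * ea = ea * t * ea := by
    calc ea * s * ea = (ea * s * ea) * (a * (ea * t * ea)) := by rw [ht', mul_assoc (ea*s) ea ea, he]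
    _ = ((ea * s * ea) * a) * (ea * t * ea) := (mul_assoc _ _ _).symm
    _ = ea * (ea * t * ea) := by rw [hs']
    _ = ea * t * ea := by rw [← mul_assoc, ← mul_assoc, he]
  exact ⟨ea * s * ea, hs', by rw [heq, ht']⟩

/-- In a Clifford semigroup the idempotents form a semilattice, and sending
each element to the unique idempotent in its H-class is a homomorphism onto
this semilattice. -/
theorem clifford_idempotents_semilattice_and_projection_hom [Semigroup S]
    (hreg : ∀ a : S, ∃ x, a * x * a = a)
    (hcent : ∀ e : S, e * e = e → ∀ s : S, e * s = s * e) :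
    (∀ e f : S, e * e = e → f * f = f →
      (e * f) * (e * f) = e * f ∧ e * f = f * e) ∧
    (∀ a b ea eb : S, ea * ea = ea → GreenH a ea → eb * eb = eb → GreenH b eb →
      GreenH (a * b) (ea * eb)) := by
  constructor
  · intro e f he hf
    refine ⟨?_, hcent e he f⟩
    calc (e * f) * (e * f) = e * (f * e) * f := by rw [mul_assoc, ← mul_assoc f e f, ← mul_assoc]
    _ = e * (e * f) * f := by rw [← hcent e he f]
    _ = (e * e) * (f * f) := by rw [← mul_assoc, mul_assoc (e*e)]
    _ = e * f := by rw [he, hf]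
  · intro a b ea eb hea ha heb hb
    obtain ⟨heaa, haea, a', ha'1, ha'2⟩ := key hcent hea ha
    obtain ⟨hebb, hbeb, b', hb'1, hb'2⟩ := key hcent heb hb
    have hef : (ea * eb) * (ea * eb) = ea * eb := by
      calc (ea * eb) * (ea * eb) = ea * (eb * ea) * eb := by
            rw [mul_assoc, ← mul_assoc eb ea eb, ← mul_assoc]
      _ = ea * (ea * eb) * eb := by rw [hcent eb heb ea]
      _ = (ea * ea) * (eb * eb) := by rw [← mul_assoc, mul_assoc (ea*ea)]
      _ = ea * eb := by rw [hea, heb]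
    -- (a*b)*(ea*eb) = a*b
    have h2 : (a * b) * (ea * eb) = a * b := by
      rw [← hcent (ea*eb) hef (a*b)]
      calc (ea * eb) * (a * b) = ea * (eb * a) * b := by
            rw [mul_assoc, ← mul_assoc eb a b, ← mul_assoc]
      _ = ea * (a * eb) * b := by rw [hcent eb heb a]
      _ = (ea * a) * (eb * b) := by rw [← mul_assoc, mul_assoc (ea*a)]
      _ = a * b := by rw [heaa, hebb]
    have h4 : (ea * eb) * (a * b) = a * b := by
      rw [hcent (ea*eb) hef (a*b)]; exact h2
    -- (b'*a')*(a*b) = ea*eb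
    have h1 : (b' * a') * (a * b) = ea * eb := by
      calc (b' * a') * (a * b) = b' * (a' * a) * b := by
            rw [mul_assoc, ← mul_assoc a' a b, ← mul_assoc]
      _ = b' * ea * b := by rw [ha'1]
      _ = ea * b' * b := by rw [hcent ea hea b']
      _ = ea * eb := by rw [mul_assoc, hb'1]
    have h3 : (a * b) * (b' * a') = ea * eb := by
      calc (a * b) * (b' * a') = a * (b * b') * a' := by
            rw [mul_assoc, ← mul_assoc b b' a', ← mul_assoc]
      _ = a * eb * a' := by rw [hb'2]
      _ = eb * a * a' := by rw [hcent eb heb a]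
      _ = eb * ea := by rw [mul_assoc, ha'2]
      _ = ea * eb := by rw [hcent eb heb ea]
    exact greenH_of (Or.inr ⟨a * b, h2⟩) (Or.inr ⟨b' * a', h1⟩)
      (Or.inr ⟨a * b, h4⟩) (Or.inr ⟨b' * a', h3⟩)
end

section
/- Let S be a Clifford semigroup and e,f,g,h idempotents with u ∈ eSf, v ∈ gSh. Then ρ(e,u,f) = ρ(g,v,h) (as morphisms in L(S), i.e., Se = Sg, Sf = Sh, and the maps x ↦ x*u and x ↦ x*v agree on Se) if and only if e = g, u = v, and f = h. -/
variable {S : Type*}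

/-- In a Clifford semigroup, ρ(e,u,f) = ρ(g,v,k) iff e = g, u = v and f = k. -/
theorem clifford_morphism_equality [Semigroup S]
    (hreg : ∀ a : S, ∃ x, a * x * a = a)
    (hcent : ∀ e : S, e * e = e → ∀ s : S, e * s = s * e)
    (e f g k u v : S) (he : e * e = e) (hf : f * f = f)
    (hg : g * g = g) (hk : k * k = k)
    (hu : u ∈ hset e f) (hv : v ∈ hset g k) :
    (lset e = lset g ∧ lset f = lset k ∧ ∀ x ∈ lset e, x * u = x * v) ↔
    (e = g ∧ u = v ∧ f = k) := by
  have idem_eq : ∀ a b : S, a * a = a → b * b = b → lset a = lset b → a = b := by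
    intro a b ha hb hab
    have haa : a ∈ lset a := ⟨a, ha⟩
    have hbb : b ∈ lset b := ⟨b, hb⟩
    obtain ⟨s, hs⟩ : a ∈ lset b := hab ▸ haa
    obtain ⟨t, ht⟩ : b ∈ lset a := hab ▸ hbb
    have h1 : a * b = a := by rw [← hs, mul_assoc, hb]
    have h2 : b * a = b := by rw [← ht, mul_assoc, ha]
    rw [← h1, hcent a ha, h2]
  obtain ⟨s, hs⟩ := hu
  obtain ⟨t, ht⟩ := hv
  have heu : e * u = u := by rw [← hs, ← mul_assoc, ← mul_assoc, he]
  have huf : u * f = u := by rw [← hs, mul_assoc, mul_assoc, hf, ← mul_assoc]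
  have hgv : g * v = v := by rw [← ht, ← mul_assoc, ← mul_assoc, hg]
  have hvk : v * k = v := by rw [← ht, mul_assoc, mul_assoc, hk, ← mul_assoc]
  constructor
  · rintro ⟨h1, h2, h3⟩
    have heg : e = g := idem_eq e g he hg h1
    have hfk : f = k := idem_eq f k hf hk h2
    have huv : u = v := by
      have := h3 e ⟨e, he⟩
      rw [heu] at this
      rw [this, heg, hgv]
    exact ⟨heg, huv, hfk⟩
  · rintro ⟨h1, h2, h3⟩
    exact ⟨by rw [h1], by rw [h3], fun x _ => by rw [h2]⟩
end

section
/- In a Clifford semigroup S, two principal left ideals Se and Sf (e,f idempotents) are isomorphic in the category L(S) if and only if Se = Sf. -/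
variable {S : Type*}

lemma mul_hset_mem_lset [Semigroup S] {f g v : S} (hg : g * g = g)
    (hcentg : ∀ s : S, g * s = s * g) (hv : ∃ s, g * s * f = v) (w : S) :
    w * v ∈ lset f := by
  obtain ⟨s, rfl⟩ := hv
  exact ⟨w * g * s, by simp [mul_assoc]⟩

/-- In a Clifford semigroup, Se and Sf are isomorphic in L(S) iff Se = Sf. -/
theorem clifford_iso_iff_equal_objects [Semigroup S]
    (hreg : ∀ a : S, ∃ x, a * x * a = a)
    (hcent : ∀ e : S, e * e = e → ∀ s : S, e * s = s * e)
    (e f : S) (he : e * e = e) (hf : f * f = f) :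
    (∃ u ∈ hset e f, ∃ v ∈ hset f e,
      (∀ x ∈ lset e, (x * u) * v = x) ∧ (∀ y ∈ lset f, (y * v) * u = y)) ↔
    lset e = lset f := by
  constructor
  · rintro ⟨u, hu, v, hv, hxu, hyv⟩
    ext x
    constructor
    · rintro ⟨s, rfl⟩
      have h1 : (s * e * u) * v = s * e := hxu _ ⟨s, rfl⟩
      obtain ⟨t, ht⟩ := hv
      -- v = f * t * e, so (s*e*u)*v ∈ lset f
      refine ⟨s * e * u * t * e, ?_⟩
      have hc := hcent f hf
      calc s * e * u * t * e * f = s * e * u * (f * (t * e)) := by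
            rw [hc (t * e)]; simp [mul_assoc]
        _ = (s * e * u) * v := by rw [← ht]; simp [mul_assoc]
        _ = s * e := h1
    · rintro ⟨s, rfl⟩
      have h1 : (s * f * v) * u = s * f := hyv _ ⟨s, rfl⟩
      obtain ⟨t, ht⟩ := hu
      refine ⟨s * f * v * t * f, ?_⟩
      have hc := hcent e he
      calc s * f * v * t * f * e = s * f * v * (e * (t * f)) := by
            rw [hc (t * f)]; simp [mul_assoc]
        _ = (s * f * v) * u := by rw [← ht]; simp [mul_assoc]
        _ = s * f := h1
  · intro heq
    have hce := hcent e he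
    have hcf := hcent f hf
    refine ⟨e * f, ⟨e, by rw [he]⟩, f * e, ⟨f, by rw [hf]⟩, ?_, ?_⟩
    · rintro x ⟨s, rfl⟩
      have hxf : s * e ∈ lset f := heq ▸ ⟨s, rfl⟩
      obtain ⟨t, htf⟩ := hxf
      calc s * e * (e * f) * (f * e) = s * (e * e) * (f * f) * e := by simp [mul_assoc]
        _ = (s * e * f) * e := by rw [he, hf]
        _ = (t * f * f) * e := by rw [htf]
        _ = s * e * e := by rw [mul_assoc t, hf, htf]
        _ = s * e := by rw [mul_assoc, he]
    · rintro y ⟨s, rfl⟩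
      have hyf : s * f ∈ lset e := heq ▸ ⟨s, rfl⟩
      obtain ⟨t, hte⟩ := hyf
      calc s * f * (f * e) * (e * f) = s * (f * f) * (e * e) * f := by simp [mul_assoc]
        _ = (s * f * e) * f := by rw [he, hf]
        _ = (t * e * e) * f := by rw [hte]
        _ = s * f * f := by rw [mul_assoc t, he, hte]
        _ = s * f := by rw [mul_assoc, hf]
end

section
/- Let S be a Clifford semigroup. Every normal cone γ in the category L(S) is a principal cone: if γ has apex Se with γ(Se) = ρ(e,u,e) for some u ∈ eSe, then for every idempotent f, γ(Sf) = ρ(f, f*u, e); that is, γ = ρ^u. -/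
variable {S : Type*}

/-- In a Clifford semigroup every normal cone in L(S) is principal: if γ has
apex Se with component γ(Se) = ρ(e,u,e), then γ(Sf) = ρ(f, f*u, e) for every
idempotent f, i.e. γ = ρ^u. -/
theorem clifford_normal_cone_is_principal [Semigroup S]
    (hreg : ∀ a : S, ∃ x, a * x * a = a)
    (hcent : ∀ e : S, e * e = e → ∀ s : S, e * s = s * e)
    (e : S) (he : e * e = e) (c : S → S)
    (hcomp : ∀ f : S, f * f = f → c f ∈ hset f e)
    (hcompat : ∀ f g : S, f * f = f → g * g = g → lset f ⊆ lset g →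
      ∀ x ∈ lset f, x * c g = x * c f)
    (hiso : ∃ m : S, m * m = m ∧ ∃ w ∈ hset e m,
      (∀ x ∈ lset m, (x * c m) * w = x) ∧ (∀ y ∈ lset e, (y * w) * c m = y)) :
    ∀ f : S, f * f = f → c f = f * c e := by
  intro f hf
  obtain ⟨s, hs⟩ := hcomp f hf
  obtain ⟨t, ht⟩ := hcomp e he
  have hef : e * f = f * e := hcent e he f
  have hes : e * s = s * e := hcent e he s
  have hk : (f * e) * (f * e) = f * e := by
    calc (f * e) * (f * e) = f * (e * f) * e := by simp [mul_assoc]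
    _ = f * (f * e) * e := by rw [hef]
    _ = (f * f) * (e * e) := by simp [mul_assoc]
    _ = f * e := by rw [hf, he]
  have sub_e : lset (f * e) ⊆ lset e := by
    rintro x ⟨u, rfl⟩; exact ⟨u * f, by rw [mul_assoc]⟩
  have sub_f : lset (f * e) ⊆ lset f := by
    rintro x ⟨u, rfl⟩
    exact ⟨u * e, by rw [mul_assoc, hef]⟩
  have hmem : (f * e) ∈ lset (f * e) := ⟨f, by rw [← mul_assoc, hf]⟩
  have h1 := hcompat (f * e) e hk he sub_e (f * e) hmem
  have h2 := hcompat (f * e) f hk hf sub_f (f * e) hmem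
  have hkce : (f * e) * c e = f * c e := by
    rw [← ht]
    calc f * e * (e * t * e) = f * ((e * e) * t * e) := by simp [mul_assoc]
    _ = f * (e * t * e) := by rw [he]
  have hkcf : (f * e) * c f = c f := by
    rw [← hs]
    calc f * e * (f * s * e) = f * (e * f) * (s * e) := by simp [mul_assoc]
    _ = f * (f * e) * (s * e) := by rw [hef]
    _ = (f * f) * (e * s) * e := by simp [mul_assoc]
    _ = f * (s * e) * e := by rw [hf, hes, mul_assoc]
    _ = f * s * (e * e) := by simp [mul_assoc]
    _ = f * s * e := by rw [he]
  calc c f = (f * e) * c f := hkcf.symm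
  _ = (f * e) * c e := by rw [h2, h1]
  _ = f * c e := hkce
end

section
/- Let S be a Clifford semigroup and a, b ∈ S. The principal cones ρ^a and ρ^b in L(S) are equal if and only if a = b. -/
variable {S : Type*}

/-- In a Clifford semigroup, the principal cones ρ^a and ρ^b are equal iff
a = b. -/
theorem clifford_principal_cones_equal_iff [Semigroup S]
    (hreg : ∀ a : S, ∃ x, a * x * a = a)
    (hcent : ∀ e : S, e * e = e → ∀ s : S, e * s = s * e)
    (a b : S) :
    (pL a = pL b ∧
      ∀ e : S, e * e = e → ∀ x ∈ lset e, x * (e * a) = x * (e * b)) ↔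
    a = b := by
  constructor
  · rintro ⟨hL, hcone⟩
    obtain ⟨x, hx⟩ := hreg a
    obtain ⟨e, he, hea⟩ : ∃ e : S, e * e = e ∧ e * a = a := by
      refine ⟨a * x, ?_, hx⟩
      have : a * x * a * x = a * x := by rw [hx]
      simpa [mul_assoc] using this
    have heE : e ∈ lset e := ⟨e, he⟩
    have h1 : e * (e * a) = e * (e * b) := hcone e he e heE
    have h2 : e * a = e * b := by
      rw [← mul_assoc, ← mul_assoc, he] at h1; exact h1
    -- b ∈ pL a
    have hb : b ∈ pL a := by
      rw [hL]; exact Set.mem_insert b _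
    rcases hb with hb | ⟨s, hs⟩
    · exact hb.symm
    · have heb : e * b = b := by
        rw [← hs, ← mul_assoc, hcent e he s, mul_assoc, hea]
      rw [← hea, h2, heb]
  · rintro rfl
    exact ⟨rfl, fun _ _ _ _ => rfl⟩
end

section
/- Let S be a Clifford semigroup. Then the semigroup TL(S) of all normal cones in the normal category L(S) is isomorphic to S, via the map a ↦ ρ^a. -/
variable {S : Type*}

/-- A normal cone in the category L(S), given by its component element
c e ∈ eSd at each object Se, where Sd is the apex. -/
def IsNormalConeL [Semigroup S] (c : {e : S // e * e = e} → S) : Prop :=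
  ∃ d : S, d * d = d ∧
    (∀ e : {e : S // e * e = e}, c e ∈ hset e.1 d) ∧
    (∀ e f : {e : S // e * e = e}, lset e.1 ⊆ lset f.1 →
      ∀ x ∈ lset e.1, x * c f = x * c e) ∧
    (∃ m : {e : S // e * e = e}, ∃ w ∈ hset d m.1,
      (∀ x ∈ lset m.1, (x * c m) * w = x) ∧ (∀ y ∈ lset d, (y * w) * c m = y))

/-- For a Clifford semigroup S, the semigroup TL(S) of normal cones in L(S)
is isomorphic to S via a ↦ ρ^a: the map is injective, onto the set of normal
cones, and multiplicative with respect to the cone product. -/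
theorem clifford_TL_isomorphic_to_S [Semigroup S]
    (hreg : ∀ a : S, ∃ x, a * x * a = a)
    (hcent : ∀ e : S, e * e = e → ∀ s : S, e * s = s * e) :
    ∃ Φ : S → ({e : S // e * e = e} → S),
      (∀ a : S, Φ a = fun e => e.1 * a) ∧
      Function.Injective Φ ∧
      (∀ a : S, IsNormalConeL (Φ a)) ∧
      (∀ c, IsNormalConeL c → ∃ a : S, Φ a = c) ∧
      (∀ a b : S, ∀ ea : {e : S // e * e = e}, GreenH a ea.1 →
        ∀ e : {e : S // e * e = e}, Φ (a * b) e = Φ a e * Φ b ea) := by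
  -- basic structure: for each a, an idempotent e with e*a = a*e = a and a*a' = a'*a = e
  have key : ∀ a : S, ∃ e a' : S, e * e = e ∧ e * a = a ∧ a * e = a ∧
      a * a' = e ∧ a' * a = e ∧ e * a' = a' := by
    intro a
    obtain ⟨x, hx⟩ := hreg a
    set e := x * a with hedef
    have he : e * e = e := by
      show x * a * (x * a) = x * a
      calc x * a * (x * a) = x * (a * x * a) := by simp [mul_assoc]
        _ = x * a := by rw [hx]
    have hae : a * e = a := by
      show a * (x * a) = a
      rw [← mul_assoc, hx]
    have hea : e * a = a := by rw [hcent e he a, hae]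
    set a' := x * a * x with ha'def
    have ha'a : a' * a = e := by
      show x * a * x * a = x * a
      calc x * a * x * a = x * a * (x * a) := by rw [mul_assoc]
        _ = x * a := he
    have hea' : e * a' = a' := by
      show x * a * (x * a * x) = x * a * x
      calc x * a * (x * a * x) = x * a * (x * a) * x := by simp [mul_assoc]
        _ = x * a * x := by rw [he]
    -- f := a * a' is idempotent, and f = e
    have haa' : a * a' = e := by
      set f := a * a' with hfdef
      have hf : f = a * x := by
        show a * (x * a * x) = a * x
        calc a * (x * a * x) = a * x * a * x := by simp [mul_assoc]
          _ = a * x := by rw [hx]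
      have hff : f * f = f := by
        rw [hf]
        calc (a * x) * (a * x) = (a * x * a) * x := by simp [mul_assoc]
          _ = a * x := by rw [hx]
      have hfa : f * a = a := by rw [hf, mul_assoc, ← mul_assoc, hx]
      have h1 : f = f * e := by
        calc f = a * a' := hfdef
          _ = a * (e * a') := by rw [hea']
          _ = a * (a' * e) := by rw [hcent e he a']
          _ = (a * a') * e := (mul_assoc a a' e).symm
          _ = f * e := rfl
      have h2 : e = f * e := by
        calc e = x * a := hedef
          _ = x * (f * a) := by rw [hfa]
          _ = x * (a * f) := by rw [hcent f hff a]
          _ = (x * a) * f := by rw [mul_assoc]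
          _ = f * (x * a) := by rw [← hcent f hff]
          _ = f * e := rfl
      rw [h1, ← h2]
    exact ⟨e, a', he, hea, hae, haa', ha'a, hea'⟩
  refine ⟨fun a e => e.1 * a, fun a => rfl, ?_, ?_, ?_, ?_⟩
  · -- injectivity
    intro a b hab
    have h : ∀ e : S, e * e = e → e * a = e * b := by
      intro e he
      exact congrFun hab ⟨e, he⟩
    obtain ⟨ea, a', hea, heaa, -, -, -, -⟩ := key a
    obtain ⟨eb, b', heb, hebb, -, -, -, -⟩ := key b
    have h1 : a = ea * b := by rw [← h ea hea, heaa]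
    have h2 : b = eb * a := by rw [h eb heb, hebb]
    calc a = ea * b := h1
      _ = ea * (eb * a) := by rw [← h2]
      _ = eb * (ea * a) := by
          rw [← mul_assoc, hcent ea hea eb, mul_assoc]
      _ = eb * a := by rw [heaa]
      _ = b := h2.symm
  · -- each principal cone is normal
    intro a
    obtain ⟨d, a', hd, hda, had, haa', ha'a, hda'⟩ := key a
    refine ⟨d, hd, ?_, ?_, ⟨d, hd⟩, a', ⟨a', by
      show d * a' * d = a'
      rw [hda', ← hcent d hd a', hda']⟩, ?_, ?_⟩
    · intro e
      exact ⟨a, by show e.1 * a * d = e.1 * a; rw [mul_assoc, had]⟩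
    · intro e f hef x hx
      obtain ⟨s, hs⟩ := hx
      have hxe : x * e.1 = x := by rw [← hs, mul_assoc, e.2]
      have hxf : x * f.1 = x := by
        obtain ⟨t, ht⟩ := hef ⟨s, hs⟩
        rw [← ht, mul_assoc, f.2]
      show x * (f.1 * a) = x * (e.1 * a)
      rw [← mul_assoc, hxf, ← mul_assoc x e.1 a, hxe]
    · intro x hx
      obtain ⟨s, hs⟩ := hx
      show x * (d * a) * a' = x
      rw [hcent d hd a, had, mul_assoc, haa', ← hs, mul_assoc, hd]
    · intro y hy
      obtain ⟨s, hs⟩ := hy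
      show y * a' * (d * a) = y
      rw [hcent d hd a, had, mul_assoc, ha'a, ← hs, mul_assoc, hd]
  · -- surjectivity onto normal cones
    intro c hc
    obtain ⟨d, hd, hmem, hnat, -⟩ := hc
    refine ⟨c ⟨d, hd⟩, funext fun e => ?_⟩
    set a := c ⟨d, hd⟩ with hadef
    have hda : d * a = a := by
      obtain ⟨s, hs⟩ := hmem ⟨d, hd⟩
      show d * a = a
      rw [hadef, ← hs, ← mul_assoc, ← mul_assoc, hd]
    have hdc : d * c e = c e := by
      obtain ⟨s, hs⟩ := hmem e
      rw [← hs, hcent d hd, mul_assoc, hd]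
    have hec : e.1 * c e = c e := by
      obtain ⟨s, hs⟩ := hmem e
      rw [← hs, ← mul_assoc, ← mul_assoc, e.2]
    set g := e.1 * d with hgdef
    have hg : g * g = g := by
      show e.1 * d * (e.1 * d) = e.1 * d
      calc e.1 * d * (e.1 * d) = e.1 * (d * e.1) * d := by simp [mul_assoc]
        _ = e.1 * (e.1 * d) * d := by rw [hcent d hd e.1]
        _ = e.1 * e.1 * (d * d) := by simp [mul_assoc]
        _ = e.1 * d := by rw [e.2, hd]
    have hgmem : g ∈ lset g := ⟨g, hg⟩
    have hsub1 : lset g ⊆ lset d := by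
      rintro x ⟨s, hs⟩
      exact ⟨s * e.1, by rw [← hs, hgdef, mul_assoc]⟩
    have hsub2 : lset g ⊆ lset e.1 := by
      rintro x ⟨s, hs⟩
      exact ⟨s * d, by rw [← hs, hgdef, ← hcent d hd e.1, mul_assoc]⟩
    have h1 : g * c ⟨d, hd⟩ = g * c ⟨g, hg⟩ := hnat ⟨g, hg⟩ ⟨d, hd⟩ hsub1 g hgmem
    have h2 : g * c e = g * c ⟨g, hg⟩ := hnat ⟨g, hg⟩ e hsub2 g hgmem
    have h3 : g * a = g * c e := by rw [← hadef] at h1; rw [h1, h2]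
    show e.1 * a = c e
    calc e.1 * a = e.1 * (d * a) := by rw [hda]
      _ = g * a := by rw [hgdef, mul_assoc]
      _ = g * c e := h3
      _ = e.1 * (d * c e) := by rw [hgdef, mul_assoc]
      _ = e.1 * c e := by rw [hdc]
      _ = c e := hec
  · -- multiplicativity
    intro a b ea hH e
    have ha : a ∈ pR ea.1 := by
      rw [← hH.2]
      exact Set.mem_insert a _
    have haea : a * ea.1 = a := by
      rcases ha with h | ⟨s, hs⟩
      · rw [h, ea.2]
      · rw [← hs, mul_assoc, ← hcent ea.1 ea.2 s, ← mul_assoc, ea.2]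
    show e.1 * (a * b) = (e.1 * a) * (ea.1 * b)
    calc e.1 * (a * b) = e.1 * ((a * ea.1) * b) := by rw [haea]
      _ = (e.1 * a) * (ea.1 * b) := by simp [mul_assoc]
end

section
/- Let S be a semilattice. Then every normal cone in L(S) is of the form ρ^u for a unique u ∈ S, and the semigroup TL(S) of normal cones is isomorphic to S. -/
variable {S : Type*}

/-- For a semilattice S, every normal cone in L(S) is ρ^u for a unique u, and
TL(S) is isomorphic to S via u ↦ ρ^u. -/
theorem semilattice_TL_isomorphic_to_S [Semigroup S]
    (hcomm : ∀ a b : S, a * b = b * a) (hidem : ∀ a : S, a * a = a) :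
    (∀ c, IsNormalConeL c → ∃! u : S, c = fun e => e.1 * u) ∧
    ∃ Φ : S → ({e : S // e * e = e} → S),
      (∀ a : S, Φ a = fun e => e.1 * a) ∧
      Function.Injective Φ ∧
      (∀ a : S, IsNormalConeL (Φ a)) ∧
      (∀ c, IsNormalConeL c → ∃ a : S, Φ a = c) ∧
      (∀ a b : S, ∀ ea : {e : S // e * e = e}, GreenH a ea.1 →
        ∀ e : {e : S // e * e = e}, Φ (a * b) e = Φ a e * Φ b ea) := by
  -- helper: product of two elements is idempotent (trivial here, but with comm)
  -- uniqueness of u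
  have uniq : ∀ u v : S, ((fun e : {e : S // e * e = e} => e.1 * u)
      = fun e => e.1 * v) → u = v := by
    intro u v h
    have h1 := congrFun h ⟨u, hidem u⟩
    have h2 := congrFun h ⟨v, hidem v⟩
    simp only [hidem] at h1 h2
    -- h1 : u = u * v, h2 : v * u = v
    rw [h1, hcomm, h2]
  -- existence: every normal cone is x ↦ x * d where d is the apex
  have exist : ∀ c, IsNormalConeL c → ∃ u : S, c = fun e => e.1 * u := by
    rintro c ⟨d, hd, hmem, hcompat, m, w, ⟨t, htw⟩, hL, hR⟩
    refine ⟨d, funext fun e => ?_⟩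
    obtain ⟨s, hs⟩ := hmem m
    have hmc : m.1 * c m = c m := by
      rw [← hs, ← mul_assoc, ← mul_assoc, m.2]
    have hdc : d * c m = c m := by
      rw [← hs, hcomm d ((m.1 * s) * d), mul_assoc, hd]
    have hdw : d * w = w := by
      rw [← htw, ← mul_assoc, ← mul_assoc, hd]
    have h1 : c m * w = m.1 := by
      have := hL m.1 ⟨m.1, m.2⟩
      rwa [hmc] at this
    have h2 : w * c m = d := by
      have := hR d ⟨d, hd⟩
      rwa [hdw] at this
    have hmd : m.1 = d := by rw [← h1, hcomm, h2]
    have hcm : c m = d := by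
      calc c m = c m * d := by rw [hcomm, hdc]
        _ = c m * (c m * w) := by rw [h1, hmd]
        _ = (c m * c m) * w := (mul_assoc _ _ _).symm
        _ = c m * w := by rw [hidem]
        _ = d := by rw [h1, hmd]
    -- now handle a general e; let g = e.1 * d
    have hg : (e.1 * d) * (e.1 * d) = e.1 * d := by
      rw [mul_assoc, ← mul_assoc d e.1 d, hcomm d e.1, mul_assoc e.1 d d, hd,
        ← mul_assoc, e.2]
    have sub1 : lset (e.1 * d) ⊆ lset e.1 := by
      rintro x ⟨r, hr⟩
      exact ⟨r * d, by rw [mul_assoc, hcomm d e.1, ← mul_assoc, ← hr, mul_assoc]⟩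
    have sub2 : lset (e.1 * d) ⊆ lset m.1 := by
      rintro x ⟨r, hr⟩
      rw [hmd]
      exact ⟨r * e.1, by rw [mul_assoc, hr]⟩
    obtain ⟨s', hs'⟩ := hmem e
    have hece : e.1 * c e = c e := by
      rw [← hs', ← mul_assoc, ← mul_assoc, e.2]
    have hdce : d * c e = c e := by
      rw [← hs', hcomm d ((e.1 * s') * d), mul_assoc, hd]
    have hgce : (e.1 * d) * c e = c e := by
      rw [mul_assoc, hdce, hece]
    have memg : e.1 * d ∈ lset (e.1 * d) := ⟨e.1 * d, hg⟩
    have step1 := hcompat ⟨e.1 * d, hg⟩ e sub1 (e.1 * d) memg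
    have step2 := hcompat ⟨e.1 * d, hg⟩ m sub2 (e.1 * d) memg
    calc c e = (e.1 * d) * c e := hgce.symm
      _ = (e.1 * d) * c m := step1.trans step2.symm
      _ = (e.1 * d) * d := by rw [hcm]
      _ = e.1 * d := by rw [mul_assoc, hd]
  constructor
  · intro c hc
    obtain ⟨u, hu⟩ := exist c hc
    exact ⟨u, hu, fun v hv => uniq v u (hv.symm.trans hu)⟩
  · refine ⟨fun a => fun e => e.1 * a, fun a => rfl, ?_, ?_, ?_, ?_⟩
    · intro a b h
      exact uniq a b h
    · intro a
      refine ⟨a, hidem a, fun e => ⟨e.1, by rw [e.2]⟩, ?_, ⟨a, hidem a⟩, a,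
        ⟨a, by rw [hidem, hidem]⟩, ?_, ?_⟩
      · rintro e f hsub x ⟨r, hr⟩
        obtain ⟨q, hq⟩ := hsub ⟨e.1, e.2⟩
        have hef : e.1 * f.1 = e.1 := by rw [← hq, mul_assoc, f.2]
        have hxf : x * f.1 = x := by rw [← hr, mul_assoc, hef]
        have hxe : x * e.1 = x := by rw [← hr, mul_assoc, e.2]
        rw [← mul_assoc, ← mul_assoc, hxf, hxe]
      · rintro x ⟨r, hr⟩
        have hxa : x * a = x := by rw [← hr, mul_assoc, hidem]
        show (x * (a * a)) * a = x
        rw [hidem, hxa, hxa]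
      · rintro y ⟨r, hr⟩
        have hya : y * a = y := by rw [← hr, mul_assoc, hidem]
        show (y * a) * (a * a) = y
        rw [hidem, hya, hya]
    · intro c hc
      obtain ⟨u, hu⟩ := exist c hc
      exact ⟨u, hu.symm⟩
    · rintro a b ea ⟨hLrel, _⟩ e
      -- from GreenL a ea.1, deduce a = ea.1
      have hea : ea.1 = a := by
        have h1 : ea.1 ∈ pL a := by rw [hLrel]; exact Set.mem_insert _ _
        have h2 : a ∈ pL ea.1 := by rw [← hLrel]; exact Set.mem_insert _ _
        rcases h1 with h1 | ⟨s, hs⟩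
        · exact h1
        · rcases h2 with h2 | ⟨r, hr⟩
          · exact h2.symm
          · have hea2 : ea.1 * a = ea.1 := by rw [← hs, mul_assoc, hidem]
            have ha2 : a * ea.1 = a := by rw [← hr, mul_assoc, ea.2]
            rw [← hea2, hcomm, ha2]
      show e.1 * (a * b) = (e.1 * a) * (ea.1 * b)
      rw [hea, mul_assoc, ← mul_assoc a a b, hidem]
end

section
/- Let S be a Clifford semigroup. The map sending a to the principal cone λ_a in the category R(S) of principal right ideals (defined dually by λ_a(eS) = λ(e, a*e, f) with f R a, acting by left translation) is an anti-isomorphism from S onto the semigroup TR(S) of normal cones in R(S). -/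
variable {S : Type*}

/-- A normal cone in the dual category R(S) of principal right ideals, given
by its component element c e ∈ dSe at each object eS, where dS is the apex;
components act by left translation. -/
def IsNormalConeR [Semigroup S] (c : {e : S // e * e = e} → S) : Prop :=
  ∃ d : S, d * d = d ∧
    (∀ e : {e : S // e * e = e}, c e ∈ hset d e.1) ∧
    (∀ e f : {e : S // e * e = e}, rset e.1 ⊆ rset f.1 →
      ∀ x ∈ rset e.1, c f * x = c e * x) ∧
    (∃ m : {e : S // e * e = e}, ∃ w ∈ hset m.1 d,
      (∀ x ∈ rset m.1, w * (c m * x) = x) ∧ (∀ y ∈ rset d, c m * (w * y) = y))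


lemma clifford_elem [Semigroup S]
    (hreg : ∀ a : S, ∃ x, a * x * a = a)
    (hcent : ∀ e : S, e * e = e → ∀ s : S, e * s = s * e) (a : S) :
    ∃ e x' : S, e * e = e ∧ a * e = a ∧ e * a = a ∧ e = a * x' ∧ e = x' * a ∧
      x' * a * x' = x' ∧ a * x' * a = a := by
  obtain ⟨x, hx⟩ := hreg a
  have hx2 : a * (x * a) = a := by rw [← mul_assoc, hx]
  have hxa : x * a * (x * a) = x * a := by
    rw [mul_assoc x a (x * a), hx2]
  set x' := x * a * x with hx'
  have h1 : a * x' * a = a := by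
    simp only [hx', ← mul_assoc]; rw [hx, hx]
  have hx'a : x' * a = x * a := by
    calc x' * a = x * (a * (x * a)) := by simp only [hx', mul_assoc]
    _ = x * a := by rw [hx2]
  have h2 : x' * a * x' = x' := by
    calc x' * a * x' = (x * a) * ((x * a) * x) := by
          rw [hx'a]
    _ = (x * a * (x * a)) * x := by simp only [mul_assoc]
    _ = x * a * x := by rw [hxa]
    _ = x' := hx'.symm
  set e := a * x' with he
  have hee : e * e = e := by
    calc e * e = a * x' * a * x' := by simp only [he, mul_assoc]
    _ = a * x' := by rw [h1]
  have hea : e * a = a := h1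
  have hae : a * e = a := by rw [← hcent e hee a]; exact hea
  have haax : a * a * x' = a := by rw [mul_assoc]; exact hae
  have hf : (x' * a) * (x' * a) = x' * a := by
    calc (x' * a) * (x' * a) = x' * a * x' * a := by simp only [mul_assoc]
    _ = x' * a := by rw [h2]
  have hxaa : x' * a * a = a := by
    rw [hcent (x' * a) hf a, ← mul_assoc]; exact h1
  have hef : e = x' * a := by
    calc e = a * x' := he
    _ = (x' * a * a) * x' := by rw [hxaa]
    _ = x' * (a * a * x') := by simp only [mul_assoc]
    _ = x' * a := by rw [haax]
  exact ⟨e, x', hee, hae, hea, he, hef, h2, h1⟩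
/-- For a Clifford semigroup S, a ↦ λ_a is an anti-isomorphism from S onto the
semigroup TR(S) of normal cones in R(S). -/
theorem clifford_TR_anti_isomorphic_to_S [Semigroup S]
    (hreg : ∀ a : S, ∃ x, a * x * a = a)
    (hcent : ∀ e : S, e * e = e → ∀ s : S, e * s = s * e) :
    ∃ Φ : S → ({e : S // e * e = e} → S),
      (∀ a : S, Φ a = fun e => a * e.1) ∧
      Function.Injective Φ ∧
      (∀ a : S, IsNormalConeR (Φ a)) ∧
      (∀ c, IsNormalConeR c → ∃ a : S, Φ a = c) ∧
      (∀ a b : S, ∀ eb : {e : S // e * e = e}, GreenH b eb.1 →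
        ∀ e : {e : S // e * e = e}, Φ (a * b) e = Φ a eb * Φ b e) := by
  refine ⟨fun a e => a * e.1, fun a => rfl, ?_, ?_, ?_, ?_⟩
  · -- injective
    intro a b h
    obtain ⟨ea, xa, heea, haea, -, -, -, -, -⟩ := clifford_elem hreg hcent a
    obtain ⟨eb, xb, heeb, hbeb, -, -, -, -, -⟩ := clifford_elem hreg hcent b
    have h1 : a * ea = b * ea := congrFun h ⟨ea, heea⟩
    have h2 : a * eb = b * eb := congrFun h ⟨eb, heeb⟩
    have ha : a = b * ea := by rw [← h1, haea]
    have hb : b = a * eb := by rw [h2]; exact hbeb.symm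
    calc a = b * ea := ha
    _ = a * eb * ea := by rw [← hb]
    _ = a * (eb * ea) := mul_assoc ..
    _ = a * (ea * eb) := by rw [hcent eb heeb ea]
    _ = a * ea * eb := (mul_assoc ..).symm
    _ = a * eb := by rw [haea]
    _ = b := hb.symm
  · -- each Φ a is a normal cone
    intro a
    obtain ⟨e, x', hee, hae, hea, he, hef, h2, h1⟩ := clifford_elem hreg hcent a
    have hex : e * x' = x' := by rw [hef]; exact h2
    have hxe : x' * e = x' := by
      rw [he, ← mul_assoc]; exact h2
    refine ⟨e, hee, ?_, ?_, ⟨e, hee⟩, x', ⟨x', ?_⟩, ?_, ?_⟩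
    · intro f
      exact ⟨a, by rw [hea]⟩
    · intro f g hsub x hx
      obtain ⟨s, hs⟩ := hx
      obtain ⟨t, ht⟩ := hsub ⟨f.1, f.2⟩
      have hgf : g.1 * f.1 = f.1 := by rw [← ht, ← mul_assoc, g.2]
      rw [← hs]
      calc a * g.1 * (f.1 * s) = a * (g.1 * f.1) * s := by simp only [mul_assoc]
      _ = a * f.1 * s := by rw [hgf]
      _ = a * (f.1 * f.1) * s := by rw [f.2]
      _ = a * f.1 * (f.1 * s) := by simp only [mul_assoc]
    · rw [hex, hxe]
    · rintro x ⟨s, hs⟩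
      rw [← hs]
      show x' * (a * e * (e * s)) = e * s
      rw [hae]
      calc x' * (a * (e * s)) = (x' * a) * (e * s) := (mul_assoc ..).symm
      _ = e * (e * s) := by rw [← hef]
      _ = e * s := by rw [← mul_assoc, hee]
    · rintro y ⟨s, hs⟩
      rw [← hs]
      show a * e * (x' * (e * s)) = e * s
      rw [hae]
      calc a * (x' * (e * s)) = a * ((x' * e) * s) := by rw [mul_assoc]
      _ = a * (x' * s) := by rw [hxe]
      _ = (a * x') * s := (mul_assoc ..).symm
      _ = e * s := by rw [← he]
  · -- surjective
    rintro c ⟨d, hd, hcomp, hnorm, -⟩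
    refine ⟨c ⟨d, hd⟩, ?_⟩
    funext f
    rcases f with ⟨e, he⟩
    set a := c ⟨d, hd⟩ with hadef
    show a * e = c ⟨e, he⟩
    have hg : (d * e) * (d * e) = d * e := by
      calc (d*e)*(d*e) = d * (e * d) * e := by simp only [mul_assoc]
      _ = d * (d * e) * e := by rw [← hcent d hd e]
      _ = (d * d) * (e * e) := by simp only [mul_assoc]
      _ = d * e := by rw [hd, he]
    have hsub1 : rset (d*e) ⊆ rset d := by
      rintro x ⟨s, hs⟩; exact ⟨e * s, by rw [← hs, mul_assoc]⟩
    have hsub2 : rset (d*e) ⊆ rset e := by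
      rintro x ⟨s, hs⟩
      refine ⟨d * s, ?_⟩
      rw [← hs]
      calc e * (d * s) = (e * d) * s := (mul_assoc ..).symm
      _ = (d * e) * s := by rw [← hcent d hd e]
    have hmem : (d*e) ∈ rset (d*e) := ⟨d*e, hg⟩
    have h1 := hnorm ⟨d*e, hg⟩ ⟨d, hd⟩ hsub1 (d*e) hmem
    have h2 := hnorm ⟨d*e, hg⟩ ⟨e, he⟩ hsub2 (d*e) hmem
    have h3 : a * (d * e) = c ⟨e, he⟩ * (d * e) := by rw [hadef, h1, ← h2]
    obtain ⟨s, hs⟩ := hcomp ⟨d, hd⟩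
    have had : a * d = a := by
      rw [← hadef] at hs
      rw [← hs]
      calc d * s * d * d = d * s * (d * d) := mul_assoc ..
      _ = d * s * d := by rw [hd]
    obtain ⟨t, ht⟩ := hcomp ⟨e, he⟩
    have hced : c ⟨e, he⟩ * d = c ⟨e, he⟩ := by
      rw [← ht]
      calc d * t * e * d = d * t * (e * d) := mul_assoc ..
      _ = d * t * (d * e) := by rw [← hcent d hd e]
      _ = d * (t * d) * e := by simp only [mul_assoc]
      _ = d * (d * t) * e := by rw [← hcent d hd t]
      _ = (d * d) * t * e := by simp only [mul_assoc]
      _ = d * t * e := by rw [hd]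
    have hcee : c ⟨e, he⟩ * e = c ⟨e, he⟩ := by
      rw [← ht]
      calc d * t * e * e = d * t * (e * e) := mul_assoc ..
      _ = d * t * e := by rw [he]
    calc a * e = a * d * e := by rw [had]
    _ = a * (d * e) := mul_assoc ..
    _ = c ⟨e, he⟩ * (d * e) := h3
    _ = c ⟨e, he⟩ * d * e := (mul_assoc ..).symm
    _ = c ⟨e, he⟩ := by rw [hced, hcee]
  · -- anti-homomorphism
    intro a b eb hH e
    have hmem : b ∈ pL eb.1 := by rw [← hH.1]; exact Set.mem_insert _ _
    have hb : eb.1 * b = b := by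
      rcases Set.mem_insert_iff.mp hmem with hbe | ⟨s, hs⟩
      · rw [hbe]; exact eb.2
      · rw [← hs]
        calc eb.1 * (s * eb.1) = (eb.1 * s) * eb.1 := (mul_assoc ..).symm
        _ = (s * eb.1) * eb.1 := by rw [← hcent eb.1 eb.2 s]
        _ = s * (eb.1 * eb.1) := mul_assoc ..
        _ = s * eb.1 := by rw [eb.2]
    show a * b * e.1 = (a * eb.1) * (b * e.1)
    calc a * b * e.1 = a * (eb.1 * b) * e.1 := by rw [hb]
    _ = (a * eb.1) * (b * e.1) := by simp only [mul_assoc]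
end
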